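/- arXiv:2605.00710 — 4 statements merged into one kernel-verified Lean document; each statement's English description precedes it below -/
import Mathlib

section
/- Let G be a bridgeless connected graph in which {e1, e2}, {e2, e3}, and {e1, e3} are all 2-edge-cuts, where e2 = u2v2 and e3 = u3v3 are labelled so that u2 and u3 lie in the connected component A of G − {e2, e3} that contains the edge e1. Assume u2 ≠ u3 and u2u3 ∉ E(G), and let G1 = A + e'2 be the graph obtained from A by adding the new edge e'2 = u2u3 (this is the component containing e1 after the {e2, e3}-reduction). Then {e1, e'2} is a 2-edge-cut of G1. -/
open SimpleGraph

/-- A graph is cubic if every vertex has degree `3`. -/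
def IsCubic {V : Type*} (G : SimpleGraph V) : Prop :=
  ∀ v : V, (G.neighborSet v).ncard = 3

/-- A graph is bridgeless if it has no bridge. -/
def Bridgeless {V : Type*} (G : SimpleGraph V) : Prop :=
  ∀ e : Sym2 V, ¬ G.IsBridge e

/-- `S` is a set of edges of `G` whose deletion disconnects `G`. -/
def IsDisconnectingSet {V : Type*} (G : SimpleGraph V) (S : Set (Sym2 V)) : Prop :=
  S ⊆ G.edgeSet ∧ ¬ (G.deleteEdges S).Connected

/-- A `k`-edge-cut: an inclusion-minimal set of `k` edges whose deletion disconnects `G`. -/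
def IsKEdgeCut {V : Type*} (G : SimpleGraph V) (k : ℕ) (S : Set (Sym2 V)) : Prop :=
  S.ncard = k ∧ IsDisconnectingSet G S ∧ ∀ T : Set (Sym2 V), T ⊂ S → ¬ IsDisconnectingSet G T

/-- A perfect matching of `G`, as a set of edges such that every vertex is incident with
exactly one edge of the set. -/
def IsPerfectMatchingSet {V : Type*} (G : SimpleGraph V) (M : Set (Sym2 V)) : Prop :=
  M ⊆ G.edgeSet ∧ ∀ v : V, ∃! e : Sym2 V, e ∈ M ∧ v ∈ e

/-- A well-spread perfect matching: a perfect matching containing exactly one edge of every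
`3`-edge-cut. -/
def IsWellSpreadPM {V : Type*} (G : SimpleGraph V) (M : Set (Sym2 V)) : Prop :=
  IsPerfectMatchingSet G M ∧ ∀ C : Set (Sym2 V), IsKEdgeCut G 3 C → (M ∩ C).ncard = 1

/-- A graph is `3`-edge-connected if it is connected, has at least two vertices, and stays
connected after deleting any set of fewer than `3` edges. -/
def ThreeEdgeConnected {V : Type*} [Fintype V] (G : SimpleGraph V) : Prop :=
  G.Connected ∧ 1 < Fintype.card V ∧
    ∀ S : Set (Sym2 V), S.ncard < 3 → (G.deleteEdges S).Connected

private lemma reach_transfer {V : Type*} {H K : SimpleGraph V}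
    (h : ∀ a b, K.Adj a b → H.Reachable a b) {x y : V} (hxy : K.Reachable x y) :
    H.Reachable x y := by
  obtain ⟨w⟩ := hxy
  induction w with
  | nil => exact Reachable.refl _
  | cons ha _ ih => exact (h _ _ ha).trans ih

private lemma reach_transfer2 {V : Type*} {H K : SimpleGraph V} {a b : V}
    (h : ∀ p q, K.Adj p q → H.Reachable p q ∨ s(p, q) = s(a, b)) {x y : V}
    (hxy : K.Reachable x y) :
    H.Reachable x y ∨ (H.Reachable x a ∧ H.Reachable b y) ∨
      (H.Reachable x b ∧ H.Reachable a y) := by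
  obtain ⟨w⟩ := hxy
  induction w with
  | nil => exact Or.inl (Reachable.refl _)
  | @cons x' q y' ha p ih =>
    rcases h _ _ ha with hr | he
    · rcases ih with h1 | ⟨h1, h2⟩ | ⟨h1, h2⟩
      · exact Or.inl (hr.trans h1)
      · exact Or.inr (Or.inl ⟨hr.trans h1, h2⟩)
      · exact Or.inr (Or.inr ⟨hr.trans h1, h2⟩)
    · rw [Sym2.eq_iff] at he
      rcases he with ⟨rfl, rfl⟩ | ⟨rfl, rfl⟩
      · rcases ih with h1 | ⟨h1, h2⟩ | ⟨h1, h2⟩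
        · exact Or.inr (Or.inl ⟨Reachable.refl _, h1⟩)
        · exact Or.inl (h1.symm.trans h2)
        · exact Or.inl h2
      · rcases ih with h1 | ⟨h1, h2⟩ | ⟨h1, h2⟩
        · exact Or.inr (Or.inr ⟨Reachable.refl _, h1⟩)
        · exact Or.inl h2
        · exact Or.inl (h1.symm.trans h2)

private lemma reach_mem {V : Type*} {H : SimpleGraph V} {S : Set V}
    (hS : ∀ p q, H.Adj p q → p ∈ S → q ∈ S) {x y : V}
    (hxy : H.Reachable x y) (hx : x ∈ S) : y ∈ S := by
  obtain ⟨w⟩ := hxy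
  induction w with
  | nil => exact hx
  | cons ha _ ih => exact ih (hS _ _ ha hx)

private lemma walk_induce {V : Type*} {H : SimpleGraph V} {S : Set V}
    (hS : ∀ p q, H.Adj p q → p ∈ S → q ∈ S) :
    ∀ {x y : V}, H.Walk x y → ∀ (hx : x ∈ S) (hy : y ∈ S),
      (H.induce S).Reachable ⟨x, hx⟩ ⟨y, hy⟩
  | _, _, SimpleGraph.Walk.nil, _, _ => Reachable.refl _
  | x, y, SimpleGraph.Walk.cons ha p, hx, hy => by
    have hq := hS _ _ ha hx
    exact (SimpleGraph.Adj.reachable (by simpa using ha :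
      (H.induce S).Adj ⟨x, hx⟩ ⟨_, hq⟩)).trans (walk_induce hS p hq hy)

private lemma walk_avoid {V : Type*} {H : SimpleGraph V} {S : Set V} {F : Set (Sym2 V)}
    (hS : ∀ p q, H.Adj p q → p ∉ S → q ∉ S)
    (hF : ∀ e ∈ F, ∃ a ∈ S, a ∈ e) :
    ∀ {x y : V}, H.Walk x y → x ∉ S → (H.deleteEdges F).Reachable x y
  | _, _, SimpleGraph.Walk.nil, _ => Reachable.refl _
  | x, y, @SimpleGraph.Walk.cons _ _ _ q _ ha p, hx => by
    have hq := hS _ _ ha hx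
    have hmem : s(x, q) ∉ F := by
      intro hmem
      obtain ⟨a, haS, hae⟩ := hF _ hmem
      rw [Sym2.mem_iff] at hae
      rcases hae with rfl | rfl
      · exact hx haS
      · exact hq haS
    exact (SimpleGraph.Adj.reachable (deleteEdges_adj.2 ⟨ha, hmem⟩)).trans
      (walk_avoid hS hF p hq)

/-- If `{e1, e2}`, `{e2, e3}` and `{e1, e3}` are `2`-edge-cuts of a bridgeless
connected graph `G`, and `G1 = A + e'2` is the component containing `e1` after the
`{e2, e3}`-reduction, then `{e1, e'2}` is a `2`-edge-cut of `G1`. Here `e1 = u1v1`,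
`e2 = u2v2`, `e3 = u3v3`, and `A` is the component of `G − {e2, e3}` containing
`u1, v1, u2, u3`. -/
theorem reduction_preserves_two_cut {V : Type*} [Fintype V] [DecidableEq V] (G : SimpleGraph V)
    (hconn : G.Connected) (hbl : Bridgeless G)
    (u1 v1 u2 v2 u3 v3 : V)
    (he1 : G.Adj u1 v1) (he2 : G.Adj u2 v2) (he3 : G.Adj u3 v3)
    (hcut12 : IsKEdgeCut G 2 {s(u1, v1), s(u2, v2)})
    (hcut23 : IsKEdgeCut G 2 {s(u2, v2), s(u3, v3)})
    (hcut13 : IsKEdgeCut G 2 {s(u1, v1), s(u3, v3)})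
    (A : Set V)
    (hA : A = {x | (G.deleteEdges {s(u2, v2), s(u3, v3)}).Reachable u2 x})
    (hu1A : u1 ∈ A) (hv1A : v1 ∈ A) (hu2A : u2 ∈ A) (hu3A : u3 ∈ A)
    (hne : u2 ≠ u3) (hnadj : ¬ G.Adj u2 u3) :
    ∀ G1 : SimpleGraph ↥A,
      G1 = G.induce A ⊔ fromEdgeSet {s((⟨u2, hu2A⟩ : ↥A), (⟨u3, hu3A⟩ : ↥A))} →
      IsKEdgeCut G1 2
        {s((⟨u1, hu1A⟩ : ↥A), (⟨v1, hv1A⟩ : ↥A)), s((⟨u2, hu2A⟩ : ↥A), (⟨u3, hu3A⟩ : ↥A))} := by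
  intro G1 hG1
  subst hG1
  haveI : Nonempty V := hconn.nonempty
  haveI : Nonempty ↥A := ⟨⟨u2, hu2A⟩⟩
  have hne12 : s(u1, v1) ≠ s(u2, v2) := by
    intro h
    have h2 := hcut12.1
    rw [h, Set.pair_eq_singleton, Set.ncard_singleton] at h2
    omega
  have hne13 : s(u1, v1) ≠ s(u3, v3) := by
    intro h
    have h2 := hcut13.1
    rw [h, Set.pair_eq_singleton, Set.ncard_singleton] at h2
    omega
  have hne23 : s(u2, v2) ≠ s(u3, v3) := by
    intro h
    have h2 := hcut23.1
    rw [h, Set.pair_eq_singleton, Set.ncard_singleton] at h2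
    omega
  have hbr : ∀ a b : V, G.Adj a b → (G.deleteEdges {s(a, b)}).Reachable a b := by
    intro a b hab
    have h := hbl s(a, b)
    rw [isBridge_iff] at h
    push_neg at h
    exact h
  have hdel1conn : ∀ a b : V, G.Adj a b → (G.deleteEdges {s(a, b)}).Connected := by
    intro a b hab
    refine ⟨fun x y => reach_transfer ?_ (hconn.preconnected x y)⟩
    intro p q hpq
    by_cases h : s(p, q) = s(a, b)
    · rw [Sym2.eq_iff] at h
      rcases h with ⟨rfl, rfl⟩ | ⟨rfl, rfl⟩
      · exact hbr _ _ hab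
      · exact (hbr _ _ hab).symm
    · exact SimpleGraph.Adj.reachable (deleteEdges_adj.2 ⟨hpq, by simp [h]⟩)
  have hAreach : ∀ x, x ∈ A → (G.deleteEdges {s(u2, v2), s(u3, v3)}).Reachable u2 x := by
    intro x hx; rw [hA] at hx; exact hx
  have hreachA : ∀ x, (G.deleteEdges {s(u2, v2), s(u3, v3)}).Reachable u2 x → x ∈ A := by
    intro x hx; rw [hA]; exact hx
  have hclA : ∀ p q : V, (G.deleteEdges {s(u2, v2), s(u3, v3)}).Adj p q → p ∈ A → q ∈ A := by
    intro p q hpq hp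
    exact hreachA q ((hAreach p hp).trans hpq.reachable)
  have hclA' : ∀ p q : V, (G.deleteEdges {s(u2, v2), s(u3, v3)}).Adj p q → p ∉ A → q ∉ A :=
    fun p q hpq hp hq => hp (hclA _ _ hpq.symm hq)
  have hDnc : ¬(G.deleteEdges {s(u2, v2), s(u3, v3)}).Connected := hcut23.2.1.2
  have hv2A : v2 ∉ A := by
    intro hv2
    apply hDnc
    refine ⟨fun x y => reach_transfer ?_ ((hdel1conn u3 v3 he3).preconnected x y)⟩
    intro p q hpq
    rw [deleteEdges_adj, Set.mem_singleton_iff] at hpq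
    by_cases h : s(p, q) = s(u2, v2)
    · rw [Sym2.eq_iff] at h
      rcases h with ⟨rfl, rfl⟩ | ⟨rfl, rfl⟩
      · exact hAreach _ hv2
      · exact (hAreach _ hv2).symm
    · refine SimpleGraph.Adj.reachable (deleteEdges_adj.2 ⟨hpq.1, ?_⟩)
      simp only [Set.mem_insert_iff, Set.mem_singleton_iff]
      push_neg
      exact ⟨h, hpq.2⟩
  have hv3A : v3 ∉ A := by
    intro hv3
    apply hDnc
    refine ⟨fun x y => reach_transfer ?_ ((hdel1conn u2 v2 he2).preconnected x y)⟩
    intro p q hpq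
    rw [deleteEdges_adj, Set.mem_singleton_iff] at hpq
    by_cases h : s(p, q) = s(u3, v3)
    · rw [Sym2.eq_iff] at h
      rcases h with ⟨rfl, rfl⟩ | ⟨rfl, rfl⟩
      · exact (hAreach _ hu3A).symm.trans (hAreach _ hv3)
      · exact ((hAreach _ hu3A).symm.trans (hAreach _ hv3)).symm
    · refine SimpleGraph.Adj.reachable (deleteEdges_adj.2 ⟨hpq.1, ?_⟩)
      simp only [Set.mem_insert_iff, Set.mem_singleton_iff]
      push_neg
      exact ⟨hpq.2, h⟩
  have hBreach : ∀ x, x ∉ A → (G.deleteEdges {s(u2, v2), s(u3, v3)}).Reachable v2 x := by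
    intro x hx
    have hr := (hdel1conn u3 v3 he3).preconnected x u2
    have hstep : ∀ p q : V, (G.deleteEdges {s(u3, v3)}).Adj p q →
        (G.deleteEdges {s(u2, v2), s(u3, v3)}).Reachable p q ∨ s(p, q) = s(u2, v2) := by
      intro p q hpq
      rw [deleteEdges_adj, Set.mem_singleton_iff] at hpq
      by_cases h : s(p, q) = s(u2, v2)
      · exact Or.inr h
      · refine Or.inl (SimpleGraph.Adj.reachable (deleteEdges_adj.2 ⟨hpq.1, ?_⟩))
        simp only [Set.mem_insert_iff, Set.mem_singleton_iff]
        push_neg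
        exact ⟨h, hpq.2⟩
    rcases reach_transfer2 hstep hr with h | ⟨h, _⟩ | ⟨h, _⟩
    · exact absurd (hreachA x h.symm) hx
    · exact absurd (hreachA x h.symm) hx
    · exact h.symm
  have hv2v3r : (G.deleteEdges {s(u2, v2), s(u3, v3)}).Reachable v2 v3 := hBreach v3 hv3A
  have hD1leD : G.deleteEdges {s(u1, v1), s(u2, v2), s(u3, v3)} ≤
      G.deleteEdges {s(u2, v2), s(u3, v3)} := by
    apply deleteEdges_anti
    intro e he
    simp only [Set.mem_insert_iff, Set.mem_singleton_iff] at he ⊢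
    tauto
  have hclD1 : ∀ p q : V, (G.deleteEdges {s(u1, v1), s(u2, v2), s(u3, v3)}).Adj p q →
      p ∈ A → q ∈ A := fun p q hpq hp => hclA p q (hD1leD hpq) hp
  have hdec : ∀ p q : V, p ∈ A → (G.deleteEdges {s(u1, v1), s(u3, v3)}).Reachable p q →
      (G.deleteEdges {s(u1, v1), s(u2, v2), s(u3, v3)}).Reachable p q ∨
        ((G.deleteEdges {s(u1, v1), s(u2, v2), s(u3, v3)}).Reachable p u2 ∧
          (G.deleteEdges {s(u1, v1), s(u2, v2), s(u3, v3)}).Reachable v2 q) := by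
    intro p q hp hr
    have hstep : ∀ a b : V, (G.deleteEdges {s(u1, v1), s(u3, v3)}).Adj a b →
        (G.deleteEdges {s(u1, v1), s(u2, v2), s(u3, v3)}).Reachable a b ∨
          s(a, b) = s(u2, v2) := by
      intro a b hab
      rw [deleteEdges_adj] at hab
      by_cases heq : s(a, b) = s(u2, v2)
      · exact Or.inr heq
      · refine Or.inl (SimpleGraph.Adj.reachable (deleteEdges_adj.2 ⟨hab.1, ?_⟩))
        have h2 := hab.2
        simp only [Set.mem_insert_iff, Set.mem_singleton_iff] at h2 ⊢
        push_neg at h2 ⊢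
        exact ⟨h2.1, heq, h2.2⟩
    rcases reach_transfer2 hstep hr with h | ⟨ha, hb⟩ | ⟨ha, _⟩
    · exact Or.inl h
    · exact Or.inr ⟨ha, hb⟩
    · exact absurd (reach_mem hclD1 ha hp) hv2A
  have hAstar : ∀ x, x ∈ A →
      (G.deleteEdges {s(u1, v1), s(u2, v2), s(u3, v3)}).Reachable x u2 ∨
        (G.deleteEdges {s(u1, v1), s(u2, v2), s(u3, v3)}).Reachable x u3 := by
    intro x hx
    have h13 : ∀ a b : V, (G.deleteEdges {s(u1, v1)}).Adj a b →
        (G.deleteEdges {s(u1, v1), s(u3, v3)}).Reachable a b ∨ s(a, b) = s(u3, v3) := by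
      intro a b hab
      rw [deleteEdges_adj, Set.mem_singleton_iff] at hab
      by_cases heq : s(a, b) = s(u3, v3)
      · exact Or.inr heq
      · refine Or.inl (SimpleGraph.Adj.reachable (deleteEdges_adj.2 ⟨hab.1, ?_⟩))
        simp only [Set.mem_insert_iff, Set.mem_singleton_iff]
        push_neg
        exact ⟨hab.2, heq⟩
    rcases reach_transfer2 h13 ((hdel1conn u1 v1 he1).preconnected x u2) with
      h | ⟨ha, _⟩ | ⟨ha, _⟩
    · rcases hdec x u2 hx h with h' | ⟨h', _⟩
      · exact Or.inl h'
      · exact Or.inl h'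
    · rcases hdec x u3 hx ha with h' | ⟨h', _⟩
      · exact Or.inr h'
      · exact Or.inl h'
    · rcases hdec x v3 hx ha with h' | ⟨h', _⟩
      · exact absurd (reach_mem hclD1 h' hx) hv3A
      · exact Or.inl h'
  have hC1 : ¬(G.deleteEdges {s(u1, v1), s(u2, v2), s(u3, v3)}).Reachable u2 u3 := by
    intro hr
    apply hcut12.2.1.2
    have hD1le : G.deleteEdges {s(u1, v1), s(u2, v2), s(u3, v3)} ≤
        G.deleteEdges {s(u1, v1), s(u2, v2)} := by
      apply deleteEdges_anti
      intro e he
      simp only [Set.mem_insert_iff, Set.mem_singleton_iff] at he ⊢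
      tauto
    have h3adj : (G.deleteEdges {s(u1, v1), s(u2, v2)}).Adj u3 v3 := by
      refine deleteEdges_adj.2 ⟨he3, ?_⟩
      simp only [Set.mem_insert_iff, Set.mem_singleton_iff]
      push_neg
      exact ⟨fun h => hne13 h.symm, fun h => hne23 h.symm⟩
    have hv3v2 : (G.deleteEdges {s(u1, v1), s(u2, v2)}).Reachable v3 v2 := by
      obtain ⟨w⟩ := hv2v3r.symm
      have havoid := walk_avoid (H := G.deleteEdges {s(u2, v2), s(u3, v3)}) (S := A)
        (F := {s(u1, v1)}) hclA'
        (by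
          intro e he
          rw [Set.mem_singleton_iff] at he
          exact ⟨u1, hu1A, by rw [he]; exact Sym2.mem_mk_left _ _⟩) w hv3A
      refine havoid.mono ?_
      intro a b hab
      rw [deleteEdges_adj, Set.mem_singleton_iff] at hab
      obtain ⟨hab1, hab2⟩ := hab
      rw [deleteEdges_adj] at hab1
      refine deleteEdges_adj.2 ⟨hab1.1, ?_⟩
      have h2 := hab1.2
      simp only [Set.mem_insert_iff, Set.mem_singleton_iff] at h2 ⊢
      push_neg at h2 ⊢
      exact ⟨hab2, h2.1⟩
    have hu2v2 : (G.deleteEdges {s(u1, v1), s(u2, v2)}).Reachable u2 v2 :=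
      ((hr.mono hD1le).trans h3adj.reachable).trans hv3v2
    have hu1v1 : (G.deleteEdges {s(u1, v1), s(u2, v2)}).Reachable u1 v1 := by
      rcases hAstar u1 hu1A with h | h <;> rcases hAstar v1 hv1A with h' | h'
      · exact (h.mono hD1le).trans (h'.mono hD1le).symm
      · exact ((h.mono hD1le).trans (hr.mono hD1le)).trans (h'.mono hD1le).symm
      · exact ((h.mono hD1le).trans (hr.symm.mono hD1le)).trans (h'.mono hD1le).symm
      · exact (h.mono hD1le).trans (h'.mono hD1le).symm
    refine ⟨fun x y => reach_transfer ?_ (hconn.preconnected x y)⟩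
    intro p q hpq
    by_cases h1 : s(p, q) = s(u1, v1)
    · rw [Sym2.eq_iff] at h1
      rcases h1 with ⟨rfl, rfl⟩ | ⟨rfl, rfl⟩
      · exact hu1v1
      · exact hu1v1.symm
    · by_cases h2 : s(p, q) = s(u2, v2)
      · rw [Sym2.eq_iff] at h2
        rcases h2 with ⟨rfl, rfl⟩ | ⟨rfl, rfl⟩
        · exact hu2v2
        · exact hu2v2.symm
      · refine SimpleGraph.Adj.reachable (deleteEdges_adj.2 ⟨hpq, ?_⟩)
        simp only [Set.mem_insert_iff, Set.mem_singleton_iff]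
        push_neg
        exact ⟨h1, h2⟩
  have hE1E2 : s((⟨u1, hu1A⟩ : ↥A), (⟨v1, hv1A⟩ : ↥A)) ≠
      s((⟨u2, hu2A⟩ : ↥A), (⟨u3, hu3A⟩ : ↥A)) := by
    intro h
    simp only [Sym2.eq_iff, Subtype.mk.injEq] at h
    apply hnadj
    rcases h with ⟨h1, h2⟩ | ⟨h1, h2⟩
    · rw [← h1, ← h2]; exact he1
    · rw [← h1, ← h2]; exact he1.symm
  have hindconn : (G.induce A).Connected := by
    have hDind : (G.deleteEdges {s(u2, v2), s(u3, v3)}).induce A ≤ G.induce A := by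
      intro a b hab
      simp only [comap_adj, Function.Embedding.coe_subtype, deleteEdges_adj] at hab ⊢
      exact hab.1
    refine ⟨fun x y => ?_⟩
    obtain ⟨wx⟩ := hAreach x.1 x.2
    obtain ⟨wy⟩ := hAreach y.1 y.2
    have rx := walk_induce hclA wx hu2A x.2
    have ry := walk_induce hclA wy hu2A y.2
    exact (rx.mono hDind).symm.trans (ry.mono hDind)
  have hdelE2conn : ((G.induce A ⊔
      fromEdgeSet {s((⟨u2, hu2A⟩ : ↥A), (⟨u3, hu3A⟩ : ↥A))}).deleteEdges
        {s((⟨u2, hu2A⟩ : ↥A), (⟨u3, hu3A⟩ : ↥A))}).Connected := by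
    refine hindconn.mono ?_
    intro a b hab
    refine deleteEdges_adj.2 ⟨Or.inl hab, ?_⟩
    rw [Set.mem_singleton_iff]
    intro h
    apply hnadj
    have hG : G.Adj ↑a ↑b := by simpa using hab
    rw [Sym2.eq_iff] at h
    rcases h with ⟨rfl, rfl⟩ | ⟨rfl, rfl⟩
    · exact hG
    · exact hG.symm
  have hdelE1conn : ((G.induce A ⊔
      fromEdgeSet {s((⟨u2, hu2A⟩ : ↥A), (⟨u3, hu3A⟩ : ↥A))}).deleteEdges
        {s((⟨u1, hu1A⟩ : ↥A), (⟨v1, hv1A⟩ : ↥A))}).Connected := by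
    have hlift : ∀ p q : ↥A,
        (G.deleteEdges {s(u1, v1), s(u2, v2), s(u3, v3)}).Reachable ↑p ↑q →
        ((G.induce A ⊔
          fromEdgeSet {s((⟨u2, hu2A⟩ : ↥A), (⟨u3, hu3A⟩ : ↥A))}).deleteEdges
            {s((⟨u1, hu1A⟩ : ↥A), (⟨v1, hv1A⟩ : ↥A))}).Reachable p q := by
      intro p q hpq
      obtain ⟨w⟩ := hpq
      have hind := walk_induce hclD1 w p.2 q.2
      refine hind.mono ?_
      intro a b hab
      simp only [comap_adj, Function.Embedding.coe_subtype, deleteEdges_adj] at hab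
      have hGadj : (G.induce A).Adj a b := by
        simp only [comap_adj, Function.Embedding.coe_subtype]
        exact hab.1
      refine deleteEdges_adj.2 ⟨Or.inl hGadj, ?_⟩
      rw [Set.mem_singleton_iff]
      intro heq
      apply hab.2
      rw [Sym2.eq_iff] at heq
      rcases heq with ⟨rfl, rfl⟩ | ⟨rfl, rfl⟩
      · exact Set.mem_insert _ _
      · rw [Sym2.eq_swap]; exact Set.mem_insert _ _
    refine ⟨fun x y => ?_⟩
    suffices h : ∀ z : ↥A, ((G.induce A ⊔
        fromEdgeSet {s((⟨u2, hu2A⟩ : ↥A), (⟨u3, hu3A⟩ : ↥A))}).deleteEdges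
          {s((⟨u1, hu1A⟩ : ↥A), (⟨v1, hv1A⟩ : ↥A))}).Reachable ⟨u2, hu2A⟩ z by
      exact (h x).symm.trans (h y)
    intro z
    rcases hAstar z.1 z.2 with h | h
    · exact (hlift z ⟨u2, hu2A⟩ h).symm
    · have hadj : ((G.induce A ⊔
          fromEdgeSet {s((⟨u2, hu2A⟩ : ↥A), (⟨u3, hu3A⟩ : ↥A))}).deleteEdges
            {s((⟨u1, hu1A⟩ : ↥A), (⟨v1, hv1A⟩ : ↥A))}).Adj ⟨u2, hu2A⟩ ⟨u3, hu3A⟩ := by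
        refine deleteEdges_adj.2 ⟨Or.inr ((fromEdgeSet_adj _).2 ⟨rfl, fun h' =>
          hne (congrArg Subtype.val h')⟩), ?_⟩
        rw [Set.mem_singleton_iff]
        exact fun h' => hE1E2 h'.symm
      exact hadj.reachable.trans (hlift z ⟨u3, hu3A⟩ h).symm
  refine ⟨Set.ncard_pair hE1E2, ⟨?_, ?_⟩, ?_⟩
  · intro e he
    simp only [Set.mem_insert_iff, Set.mem_singleton_iff] at he
    rcases he with rfl | rfl
    · rw [mem_edgeSet]
      exact Or.inl (by simpa using he1)
    · rw [mem_edgeSet]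
      exact Or.inr ((fromEdgeSet_adj _).2 ⟨rfl, fun h' => hne (congrArg Subtype.val h')⟩)
  · intro hc
    apply hC1
    have hmap := hc.preconnected ⟨u2, hu2A⟩ ⟨u3, hu3A⟩
    have hhom : ∀ a b : ↥A, ((G.induce A ⊔
        fromEdgeSet {s((⟨u2, hu2A⟩ : ↥A), (⟨u3, hu3A⟩ : ↥A))}).deleteEdges
          {s((⟨u1, hu1A⟩ : ↥A), (⟨v1, hv1A⟩ : ↥A)),
            s((⟨u2, hu2A⟩ : ↥A), (⟨u3, hu3A⟩ : ↥A))}).Adj a b →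
        (G.deleteEdges {s(u1, v1), s(u2, v2), s(u3, v3)}).Adj ↑a ↑b := by
      intro a b hab
      rw [deleteEdges_adj] at hab
      obtain ⟨hadj, hnot⟩ := hab
      simp only [Set.mem_insert_iff, Set.mem_singleton_iff] at hnot
      push_neg at hnot
      rcases hadj with hind | hfe
      · have hG : G.Adj ↑a ↑b := by simpa using hind
        refine deleteEdges_adj.2 ⟨hG, ?_⟩
        simp only [Set.mem_insert_iff, Set.mem_singleton_iff]
        push_neg
        refine ⟨?_, ?_, ?_⟩
        · intro h
          apply hnot.1
          rw [Sym2.eq_iff] at h ⊢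
          rcases h with ⟨h1, h2⟩ | ⟨h1, h2⟩
          · exact Or.inl ⟨Subtype.ext h1, Subtype.ext h2⟩
          · exact Or.inr ⟨Subtype.ext h1, Subtype.ext h2⟩
        · intro h
          rw [Sym2.eq_iff] at h
          rcases h with ⟨h1, h2⟩ | ⟨h1, h2⟩
          · exact hv2A (h2 ▸ b.2)
          · exact hv2A (h1 ▸ a.2)
        · intro h
          rw [Sym2.eq_iff] at h
          rcases h with ⟨h1, h2⟩ | ⟨h1, h2⟩
          · exact hv3A (h2 ▸ b.2)
          · exact hv3A (h1 ▸ a.2)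
      · rw [fromEdgeSet_adj _, Set.mem_singleton_iff] at hfe
        exact absurd hfe.1 hnot.2
    exact Reachable.map ⟨Subtype.val, fun {a b} h => hhom a b h⟩ hmap
  · intro T hT hdisc
    apply hdisc.2
    have hcase : s((⟨u1, hu1A⟩ : ↥A), (⟨v1, hv1A⟩ : ↥A)) ∉ T ∨
        s((⟨u2, hu2A⟩ : ↥A), (⟨u3, hu3A⟩ : ↥A)) ∉ T := by
      by_contra h
      push_neg at h
      refine hT.2 ?_
      intro e he
      simp only [Set.mem_insert_iff, Set.mem_singleton_iff] at he
      rcases he with rfl | rfl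
      · exact h.1
      · exact h.2
    rcases hcase with h | h
    · have hsub : T ⊆ {s((⟨u2, hu2A⟩ : ↥A), (⟨u3, hu3A⟩ : ↥A))} := by
        intro e he
        have := hT.1 he
        simp only [Set.mem_insert_iff, Set.mem_singleton_iff] at this ⊢
        rcases this with rfl | rfl
        · exact absurd he h
        · rfl
      exact hdelE2conn.mono (deleteEdges_anti hsub)
    · have hsub : T ⊆ {s((⟨u1, hu1A⟩ : ↥A), (⟨v1, hv1A⟩ : ↥A))} := by
        intro e he
        have := hT.1 he
        simp only [Set.mem_insert_iff, Set.mem_singleton_iff] at this ⊢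
        rcases this with rfl | rfl
        · rfl
        · exact absurd he h
      exact hdelE1conn.mono (deleteEdges_anti hsub)
end

section
/- Let G be a connected graph, let {e1, e2} be a 2-edge-cut of G with e1 ≠ e2, and suppose that {e1, f1, f2} is a 3-edge-cut of G with e2 ∉ {f1, f2}. Then {e2, f1, f2} is a 3-edge-cut of G as well. -/
open SimpleGraph

/-!
In a connected graph the `k`-edge-cuts are exactly the edge boundaries `δ X` of size `k` that
are minimal among nonempty edge boundaries, and `δ (X ∆ Y) = δ X ∆ δ Y`. So
`{e2, f1, f2} = {e1, e2} ∆ {e1, f1, f2}` is an edge boundary. A nonempty boundary `δ Z` strictly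
inside it either avoids `e2`, and then lies strictly inside `{e1, f1, f2}`, or contains `e2`, and
then `δ (Z ∆ X) = δ Z ∆ {e1, e2}` (with `δ X = {e1, e2}`) lies strictly inside `{e1, f1, f2}`;
both contradict the minimality of the `3`-edge-cut.
-/

open scoped symmDiff

namespace Set

variable {α : Type*} {a b c : α} {F D : Set α}

theorem notMem_pair_and_ne_of_ncard_eq_three (h : ({a, b, c} : Set α).ncard = 3) :
    a ∉ ({b, c} : Set α) ∧ b ≠ c := by
  have hpair (x y : α) : ({x, y} : Set α).ncard ≤ 2 :=
    (ncard_insert_le x {y}).trans (by rw [ncard_singleton])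
  refine ⟨fun ha => ?_, ?_⟩
  · have := hpair b c
    rw [insert_eq_of_mem ha] at h
    omega
  · rintro rfl
    have := hpair a b
    rw [pair_eq_singleton] at h
    omega

theorem pair_symmDiff_insert (hab : a ≠ b) (ha : a ∉ F) (hb : b ∉ F) :
    ({a, b} : Set α) ∆ insert a F = insert b F := by
  ext x
  simp only [mem_symmDiff, mem_insert_iff, mem_singleton_iff]
  grind

theorem ssubset_insert_of_ssubset_insert_of_notMem (hD : D ⊂ insert b F) (hb : b ∉ D)
    (ha : a ∉ F) : D ⊂ insert a F :=
  ((subset_insert_iff_of_notMem hb).mp hD.subset).trans_ssubset (ssubset_insert ha)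

theorem symmDiff_pair_ssubset_insert (hab : a ≠ b) (ha : a ∉ F) (hD : D ⊂ insert b F) (hb : b ∈ D) :
    a ∈ D ∆ {a, b} ∧ D ∆ {a, b} ⊂ insert a F := by
  have hDsub := hD.subset
  obtain ⟨y, hy, hyD⟩ := exists_of_ssubset hD
  rw [ssubset_def]
  simp only [subset_def, mem_symmDiff, mem_insert_iff, mem_singleton_iff] at *
  grind

end Set

namespace SimpleGraph

variable {V : Type*} {G : SimpleGraph V}

def edgeBoundary (G : SimpleGraph V) (X : Set V) : Set (Sym2 V) :=
  {e | e ∈ G.edgeSet ∧ ∃ u v, e = s(u, v) ∧ u ∈ X ∧ v ∉ X}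

theorem mem_edgeBoundary {X : Set V} {a b : V} :
    s(a, b) ∈ G.edgeBoundary X ↔ G.Adj a b ∧ (a ∈ X ↔ b ∉ X) := by
  constructor
  · rintro ⟨he, u, v, huv, hu, hv⟩
    rcases Sym2.eq_iff.mp huv with ⟨rfl, rfl⟩ | ⟨rfl, rfl⟩ <;> exact ⟨he, by tauto⟩
  · rintro ⟨he, hab⟩
    by_cases ha : a ∈ X
    · exact ⟨he, a, b, rfl, ha, hab.mp ha⟩
    · exact ⟨he, b, a, Sym2.eq_swap, by tauto, ha⟩

theorem edgeBoundary_subset_edgeSet (X : Set V) : G.edgeBoundary X ⊆ G.edgeSet :=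
  fun _ he => he.1

theorem edgeBoundary_symmDiff (X Y : Set V) :
    G.edgeBoundary (X ∆ Y) = G.edgeBoundary X ∆ G.edgeBoundary Y := by
  ext e
  induction e using Sym2.ind with
  | _ a b =>
    simp only [Set.mem_symmDiff, mem_edgeBoundary]
    tauto

theorem not_connected_deleteEdges_edgeBoundary {X : Set V}
    (hX : (G.edgeBoundary X).Nonempty) : ¬ (G.deleteEdges (G.edgeBoundary X)).Connected := by
  obtain ⟨_, -, x, y, rfl, hx, hy⟩ := hX
  intro h
  obtain ⟨d, -, hdX, hdY⟩ := (h.preconnected x y).some.exists_boundary_dart X hx hy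
  have hadj := deleteEdges_adj.mp d.adj
  exact hadj.2 (mem_edgeBoundary.mpr ⟨hadj.1, by tauto⟩)

theorem Connected.exists_edgeBoundary_subset (hconn : G.Connected) {S : Set (Sym2 V)}
    (hS : ¬ (G.deleteEdges S).Connected) :
    ∃ X : Set V, (G.edgeBoundary X).Nonempty ∧ G.edgeBoundary X ⊆ S := by
  obtain ⟨x, y, hxy⟩ : ∃ x y, ¬ (G.deleteEdges S).Reachable x y := by
    by_contra! h
    have := hconn.nonempty
    exact hS ⟨fun x y => h x y⟩
  set X := {u | (G.deleteEdges S).Reachable x u}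
  refine ⟨X, ?_, ?_⟩
  · obtain ⟨d, -, hdX, hdY⟩ := (hconn.preconnected x y).some.exists_boundary_dart X
      (Reachable.refl x) hxy
    exact ⟨d.edge, mem_edgeBoundary.mpr ⟨d.adj, by tauto⟩⟩
  · rintro _ ⟨he, u, v, rfl, hu, hv⟩
    by_contra huv
    exact hv (hu.trans (deleteEdges_adj.mpr ⟨he, huv⟩).reachable)

theorem isKEdgeCut_iff (hconn : G.Connected) {k : ℕ} {S : Set (Sym2 V)} :
    IsKEdgeCut G k S ↔ S.ncard = k ∧ S.Nonempty ∧ (∃ X, G.edgeBoundary X = S) ∧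
      ∀ Y, (G.edgeBoundary Y).Nonempty → ¬ G.edgeBoundary Y ⊂ S := by
  have hdis {Y : Set V} (hY : (G.edgeBoundary Y).Nonempty) :
      IsDisconnectingSet G (G.edgeBoundary Y) :=
    ⟨edgeBoundary_subset_edgeSet Y, not_connected_deleteEdges_edgeBoundary hY⟩
  constructor
  · rintro ⟨hk, ⟨-, hS⟩, hmin⟩
    obtain ⟨X, hX, hXS⟩ := hconn.exists_edgeBoundary_subset hS
    have hXS : G.edgeBoundary X = S := by
      by_contra hne
      exact hmin _ (hXS.ssubset_of_ne hne) (hdis hX)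
    exact ⟨hk, hXS ▸ hX, ⟨X, hXS⟩, fun Y hY hYS => hmin _ hYS (hdis hY)⟩
  · rintro ⟨hk, hS, ⟨X, rfl⟩, hmin⟩
    refine ⟨hk, hdis hS, fun T hT ⟨_, hTS⟩ => ?_⟩
    obtain ⟨Y, hY, hYT⟩ := hconn.exists_edgeBoundary_subset hTS
    exact hmin Y hY (hYT.trans_ssubset hT)

end SimpleGraph

theorem three_edge_cut_exchange_general {V : Type*} (G : SimpleGraph V)
    (hconn : G.Connected)
    (e1 e2 f1 f2 : Sym2 V) (hne : e1 ≠ e2)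
    (hcut2 : IsKEdgeCut G 2 {e1, e2})
    (he2 : e2 ∉ ({f1, f2} : Set (Sym2 V)))
    (hcut3 : IsKEdgeCut G 3 {e1, f1, f2}) :
    IsKEdgeCut G 3 {e2, f1, f2} := by
  rw [isKEdgeCut_iff hconn] at hcut2 hcut3 ⊢
  obtain ⟨-, -, ⟨X, hX⟩, -⟩ := hcut2
  obtain ⟨hcard, -, ⟨Y, hY⟩, hmin⟩ := hcut3
  obtain ⟨he1, hf⟩ := Set.notMem_pair_and_ne_of_ncard_eq_three hcard
  have hXY : G.edgeBoundary (X ∆ Y) = {e2, f1, f2} := by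
    rw [edgeBoundary_symmDiff, hX, hY, Set.pair_symmDiff_insert hne he1 he2]
  refine ⟨by rw [Set.ncard_insert_of_notMem he2, Set.ncard_pair hf], ⟨e2, by simp⟩, ⟨_, hXY⟩,
    fun Z hZ hZsub => ?_⟩
  by_cases hZe2 : e2 ∈ G.edgeBoundary Z
  · obtain ⟨he1Z, hZX⟩ := Set.symmDiff_pair_ssubset_insert hne he1 hZsub hZe2
    rw [← hX, ← edgeBoundary_symmDiff] at he1Z hZX
    exact hmin _ ⟨e1, he1Z⟩ hZX
  · exact hmin Z hZ (Set.ssubset_insert_of_ssubset_insert_of_notMem hZsub hZe2 he1)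

/-- If `{e1, e2}` is a `2`-edge-cut and `{e1, f1, f2}` is a `3`-edge-cut with
`e2 ∉ {f1, f2}`, then `{e2, f1, f2}` is a `3`-edge-cut. -/
theorem three_edge_cut_exchange {V : Type*} [Fintype V] (G : SimpleGraph V)
    (hconn : G.Connected)
    (e1 e2 f1 f2 : Sym2 V) (hne : e1 ≠ e2)
    (hcut2 : IsKEdgeCut G 2 {e1, e2})
    (he2 : e2 ∉ ({f1, f2} : Set (Sym2 V)))
    (hcut3 : IsKEdgeCut G 3 {e1, f1, f2}) :
    IsKEdgeCut G 3 {e2, f1, f2} :=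
  three_edge_cut_exchange_general G hconn e1 e2 f1 f2 hne hcut2 he2 hcut3
end

section
/- Let G be a bridgeless cubic graph, let {e1, e2} be a 2-edge-cut of G, and let H1, H2 be the components of G − {e1, e2}. Then there is no 3-edge-cut of G of the form {e1, f2, f3} with f2 ∈ E(H1) and f3 ∈ E(H2). -/
open SimpleGraph

/-! If `{e₁, f₂, f₃}` were a `3`-edge-cut, minimality would make `G - {e₁, f₂}` and
`G - {e₁, f₃}` connected. In `G - {e₁, f₂}` a walk from a vertex of `H₁` to `v₂` can only leave
`H₁` through `e₂`, and before doing so it avoids `f₃ ∈ E(H₂)`; so every vertex of `H₁` reaches `u₂`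
in `G - {e₁, f₂, f₃}`. Symmetrically every vertex of `H₂` reaches `v₂`, and `e₂` joins the two. -/

section

variable {V : Type*} {G K : SimpleGraph V}

theorem SimpleGraph.Reachable.reachable_of_unique_exit {S : Set V} {x y u : V}
    (hxy : G.Reachable x y) (hx : x ∈ S) (hy : y ∉ S)
    (hexit : ∀ a b, G.Adj a b → a ∈ S → b ∉ S → a = u)
    (hinside : ∀ a b, G.Adj a b → a ∈ S → b ∈ S → K.Adj a b) :
    K.Reachable x u := by
  obtain ⟨p⟩ := hxy
  induction p with
  | nil => exact absurd hx hy
  | @cons a b _ hab _ ih =>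
    by_cases hb : b ∈ S
    · exact (hinside a b hab hx hb).reachable.trans (ih hb hy)
    · rw [hexit a b hab hx hb]

theorem SimpleGraph.Reachable.mem_of_adj_of_not_reachable {F : Set (Sym2 V)} {r a b : V}
    (ha : (G.deleteEdges F).Reachable r a) (hb : ¬ (G.deleteEdges F).Reachable r b)
    (hab : G.Adj a b) : s(a, b) ∈ F := by
  by_contra hF
  exact hb (ha.trans (deleteEdges_adj.2 ⟨hab, hF⟩).reachable)

theorem IsKEdgeCut.connected_deleteEdges_of_ssubset {k : ℕ} {C T : Set (Sym2 V)}
    (hC : IsKEdgeCut G k C) (hT : T ⊂ C) : (G.deleteEdges T).Connected := by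
  by_contra hdisc
  exact hC.2.2 T hT ⟨hT.subset.trans hC.2.1.1, hdisc⟩

theorem reachable_deleteEdges_of_unique_exit {S : Set V} {T C : Set (Sym2 V)} {u v x : V}
    (hT : (G.deleteEdges T).Connected) (hx : x ∈ S) (hv : v ∉ S)
    (hexit : ∀ a b, G.Adj a b → a ∈ S → b ∉ S → s(a, b) ∉ T → s(a, b) = s(u, v))
    (hinside : ∀ g ∈ C, (∀ a ∈ g, a ∈ S) → g ∈ T) :
    (G.deleteEdges C).Reachable x u := by
  refine (hT.preconnected x v).reachable_of_unique_exit hx hv (fun a b hab ha hb ↦ ?_)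
    (fun a b hab ha hb ↦ ?_)
  · obtain ⟨hab, hT⟩ := deleteEdges_adj.1 hab
    rcases Sym2.eq_iff.1 (hexit a b hab ha hb hT) with ⟨rfl, -⟩ | ⟨rfl, -⟩
    · rfl
    · exact absurd ha hv
  · obtain ⟨hab, hT⟩ := deleteEdges_adj.1 hab
    refine deleteEdges_adj.2 ⟨hab, fun hC ↦ hT (hinside _ hC fun c hc ↦ ?_)⟩
    rcases Sym2.mem_iff.1 hc with rfl | rfl <;> assumption

theorem connected_deleteEdges_of_two_edge_boundary {S : Set V} {e f₂ f₃ : Sym2 V} {u v : V}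
    (hbd : ∀ a b, G.Adj a b → a ∈ S → b ∉ S → s(a, b) = e ∨ s(a, b) = s(u, v))
    (huv : G.Adj u v) (hu : u ∈ S) (hv : v ∉ S) (he : s(u, v) ≠ e)
    (hf₂ : ∀ a ∈ f₂, a ∈ S) (hf₃ : ∀ a ∈ f₃, a ∉ S)
    (h₂ : (G.deleteEdges {e, f₂}).Connected) (h₃ : (G.deleteEdges {e, f₃}).Connected) :
    (G.deleteEdges {e, f₂, f₃}).Connected := by
  have huv' : (G.deleteEdges {e, f₂, f₃}).Adj u v := by
    refine deleteEdges_adj.2 ⟨huv, ?_⟩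
    rintro (h | rfl | rfl)
    exacts [he h, hv (hf₂ v (by simp)), hf₃ u (by simp) hu]
  have hreach : ∀ x, (G.deleteEdges {e, f₂, f₃}).Reachable x u := by
    intro x
    by_cases hx : x ∈ S
    · refine reachable_deleteEdges_of_unique_exit h₂ hx hv
        (fun a b hab ha hb hT ↦ (hbd a b hab ha hb).resolve_left fun h ↦ hT (.inl h)) ?_
      rintro g (rfl | rfl | rfl) hgS
      · simp
      · simp
      · exact absurd (hgS _ g.out_fst_mem) (hf₃ _ g.out_fst_mem)
    · refine (reachable_deleteEdges_of_unique_exit (S := Sᶜ) h₃ hx (not_not.2 hu)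
        (fun a b hab ha hb hT ↦ ?_) ?_).trans huv'.reachable.symm
      · rw [Sym2.eq_swap, Sym2.eq_swap (a := v)]
        exact (hbd b a hab.symm (not_not.1 hb) ha).resolve_left
          fun h ↦ hT (.inl (Sym2.eq_swap.trans h))
      · rintro g (rfl | rfl | rfl) hgS
        · simp
        · exact absurd (hf₂ _ g.out_fst_mem) (hgS _ g.out_fst_mem)
        · simp
  exact (connected_iff _).2 ⟨fun x y ↦ (hreach x).trans (hreach y).symm, ⟨u⟩⟩

end

theorem no_crossing_three_cut_general {V : Type*} (G : SimpleGraph V)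
    (u1 v1 u2 v2 : V)
    (he2 : G.Adj u2 v2)
    (S1 S2 : Set V)
    (hS1 : S1 = {x | (G.deleteEdges {s(u1, v1), s(u2, v2)}).Reachable u1 x})
    (hu1 : u1 ∈ S1) (hu2 : u2 ∈ S1) (hv1 : v1 ∈ S2) (hv2 : v2 ∈ S2)
    (hUnion : S1 ∪ S2 = Set.univ) (hDisj : Disjoint S1 S2)
    (huu : u1 ≠ u2)
    (f2 f3 : Sym2 V)
    (hf2S : ∀ x ∈ f2, x ∈ S1)
    (hf3S : ∀ x ∈ f3, x ∈ S2) :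
    ¬ IsKEdgeCut G 3 {s(u1, v1), f2, f3} := by
  obtain rfl : S2 = S1ᶜ :=
    (IsCompl.compl_eq ⟨hDisj, codisjoint_iff.2 (by simpa using hUnion)⟩).symm
  intro hC
  have hbd : ∀ a b, G.Adj a b → a ∈ S1 → b ∉ S1 →
      s(a, b) = s(u1, v1) ∨ s(a, b) = s(u2, v2) := by
    intro a b hab ha hb
    subst hS1
    simpa using Reachable.mem_of_adj_of_not_reachable ha hb hab
  have he : s(u2, v2) ≠ s(u1, v1) := by
    rw [Ne, Sym2.eq_iff]
    rintro (⟨rfl, -⟩ | ⟨-, rfl⟩)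
    exacts [huu rfl, hv2 hu1]
  have hf3mem := f3.out_fst_mem
  have hf3 : f3 ∉ ({s(u1, v1), f2} : Set (Sym2 V)) := by
    rintro (rfl | rfl)
    exacts [hf3S u1 (by simp) hu1, hf3S _ hf3mem (hf2S _ hf3mem)]
  have hf2 : f2 ∉ ({s(u1, v1), f3} : Set (Sym2 V)) := by
    rintro (rfl | rfl)
    exacts [hv1 (hf2S v1 (by simp)), hf3S _ hf3mem (hf2S _ hf3mem)]
  refine hC.2.1.2 (connected_deleteEdges_of_two_edge_boundary hbd he2 hu2 hv2 he hf2S hf3S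
    (hC.connected_deleteEdges_of_ssubset ?_) (hC.connected_deleteEdges_of_ssubset ?_))
  · exact Set.ssubset_iff_insert.2 ⟨f3, hf3, by grind⟩
  · exact Set.ssubset_iff_insert.2 ⟨f2, hf2, by grind⟩

/-- There is no `3`-edge-cut of `G` of the form `{e1, f2, f3}` with `f2` an edge
of the component `H1` and `f3` an edge of the component `H2`. -/
theorem no_crossing_three_cut {V : Type*} [Fintype V] [DecidableEq V] (G : SimpleGraph V)
    (hconn : G.Connected) (hbl : Bridgeless G) (hcub : IsCubic G)
    (u1 v1 u2 v2 : V)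
    (he1 : G.Adj u1 v1) (he2 : G.Adj u2 v2)
    (hcut : IsKEdgeCut G 2 {s(u1, v1), s(u2, v2)})
    (S1 S2 : Set V)
    (hS1 : S1 = {x | (G.deleteEdges {s(u1, v1), s(u2, v2)}).Reachable u1 x})
    (hS2 : S2 = {x | (G.deleteEdges {s(u1, v1), s(u2, v2)}).Reachable v1 x})
    (hu1 : u1 ∈ S1) (hu2 : u2 ∈ S1) (hv1 : v1 ∈ S2) (hv2 : v2 ∈ S2)
    (hUnion : S1 ∪ S2 = Set.univ) (hDisj : Disjoint S1 S2)
    (huu : u1 ≠ u2) (hvv : v1 ≠ v2)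
    (hnadj1 : ¬ G.Adj u1 u2) (hnadj2 : ¬ G.Adj v1 v2)
    (f2 f3 : Sym2 V)
    (hf2 : f2 ∈ G.edgeSet) (hf2S : ∀ x ∈ f2, x ∈ S1)
    (hf3 : f3 ∈ G.edgeSet) (hf3S : ∀ x ∈ f3, x ∈ S2) :
    ¬ IsKEdgeCut G 3 {s(u1, v1), f2, f3} :=
  no_crossing_three_cut_general G u1 v1 u2 v2 he2 S1 S2 hS1 hu1 hu2 hv1 hv2 hUnion hDisj huu f2 f3
    hf2S hf3S
end

section
/- Let G be a bridgeless cubic graph, let {e1, e2} be a 2-edge-cut of G with components H1, H2 of G − {e1, e2}, and let G1 = H1 + e'1 be the graph obtained on the H1 side by the {e1, e2}-reduction. Then for every edge f ∈ E(H1), the pair {e'1, f} is a 2-edge-cut of G1 if and only if both {e1, f} and {e2, f} are 2-edge-cuts of G. -/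
open SimpleGraph

private lemma walk_reach_map {V V' : Type*} (G : SimpleGraph V) (H : SimpleGraph V') (φ : V → V')
    (h : ∀ a b, G.Adj a b → φ a = φ b ∨ H.Adj (φ a) (φ b)) :
    ∀ {a b : V}, G.Reachable a b → H.Reachable (φ a) (φ b) := by
  have key : ∀ {a b : V} (p : G.Walk a b), H.Reachable (φ a) (φ b) := by
    intro a b p
    induction p with
    | nil => exact Reachable.refl _
    | cons h' p ih =>
      rcases h _ _ h' with he | ha
      · exact he ▸ ih
      · exact ha.reachable.trans ih
  intro a b hr
  exact hr.elim fun p => key p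

private lemma walk_reach_pred {V : Type*} (G H : SimpleGraph V) (P : V → Prop)
    (hP : ∀ a b, G.Adj a b → P a → P b)
    (hAdj : ∀ a b, G.Adj a b → P a → P b → H.Adj a b) :
    ∀ {a b : V}, G.Reachable a b → P a → H.Reachable a b := by
  have key : ∀ {a b : V} (p : G.Walk a b), P a → H.Reachable a b := by
    intro a b p
    induction p with
    | nil => exact fun _ => Reachable.refl _
    | cons h' p ih =>
      intro ha
      have hb := hP _ _ h' ha
      exact (hAdj _ _ h' ha hb).reachable.trans (ih hb)
  intro a b hr ha
  exact hr.elim fun p => key p ha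

private lemma walk_reach_of {V : Type*} (G H : SimpleGraph V)
    (h : ∀ a b, G.Adj a b → H.Reachable a b) :
    ∀ {a b : V}, G.Reachable a b → H.Reachable a b := by
  have key : ∀ {a b : V} (p : G.Walk a b), H.Reachable a b := by
    intro a b p
    induction p with
    | nil => exact Reachable.refl _
    | cons h' p ih => exact (h _ _ h').trans ih
  intro a b hr
  exact hr.elim fun p => key p

private lemma ssubset_pair {α : Type*} {a b : α} {T : Set α} (hab : a ≠ b) (h : T ⊂ {a, b}) :
    T = ∅ ∨ T = {a} ∨ T = {b} := by
  by_cases ha : a ∈ T <;> by_cases hb : b ∈ T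
  · exact absurd (h.subset.antisymm (by rintro x (rfl | rfl) <;> assumption)) h.ne
  · refine Or.inr (Or.inl ?_)
    apply Set.eq_singleton_iff_unique_mem.mpr ⟨ha, fun x hx => ?_⟩
    rcases h.subset hx with rfl | rfl
    · rfl
    · exact absurd hx hb
  · refine Or.inr (Or.inr ?_)
    apply Set.eq_singleton_iff_unique_mem.mpr ⟨hb, fun x hx => ?_⟩
    rcases h.subset hx with rfl | rfl
    · exact absurd hx ha
    · rfl
  · refine Or.inl (Set.eq_empty_iff_forall_notMem.mpr fun x hx => ?_)
    rcases h.subset hx with rfl | rfl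
    · exact ha hx
    · exact hb hx

private lemma not_disc_empty {V : Type*} {G : SimpleGraph V} (hconn : G.Connected) :
    ¬ IsDisconnectingSet G (∅ : Set (Sym2 V)) := by
  rintro ⟨-, hnc⟩
  rw [SimpleGraph.deleteEdges_empty] at hnc
  exact hnc hconn

private lemma not_disc_single {V : Type*} {G : SimpleGraph V} (hconn : G.Connected)
    (hbl : Bridgeless G) (e : Sym2 V) : ¬ IsDisconnectingSet G {e} := by
  induction e using Sym2.ind with
  | _ x y =>
    rintro ⟨hsub, hnc⟩
    have he : G.Adj x y := (G.mem_edgeSet).mp (hsub rfl)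
    have hb := hbl s(x, y)
    rw [isBridge_iff] at hb
    push_neg at hb
    have hreach : (G.deleteEdges {s(x, y)}).Reachable x y := hb
    apply hnc
    rw [connected_iff]
    refine ⟨fun a b => ?_, hconn.nonempty⟩
    refine walk_reach_of G _ (fun c d hcd => ?_) (hconn.preconnected a b)
    by_cases hcde : s(c, d) = s(x, y)
    · rcases Sym2.eq_iff.mp hcde with ⟨rfl, rfl⟩ | ⟨rfl, rfl⟩
      · exact hreach
      · exact hreach.symm
    · exact SimpleGraph.Adj.reachable (by simp [hcd, hcde])

/-- For an edge `f` of the component `H1`, the pair `{e'1, f}` is a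
`2`-edge-cut of the reduced graph `G1` iff both `{e1, f}` and `{e2, f}` are `2`-edge-cuts
of `G`. -/
theorem reduction_two_cut_new_edge {V : Type*} [Fintype V] [DecidableEq V] (G : SimpleGraph V)
    (hconn : G.Connected) (hbl : Bridgeless G) (hcub : IsCubic G)
    (u1 v1 u2 v2 : V)
    (he1 : G.Adj u1 v1) (he2 : G.Adj u2 v2)
    (hcut : IsKEdgeCut G 2 {s(u1, v1), s(u2, v2)})
    (S1 S2 : Set V)
    (hS1 : S1 = {x | (G.deleteEdges {s(u1, v1), s(u2, v2)}).Reachable u1 x})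
    (hS2 : S2 = {x | (G.deleteEdges {s(u1, v1), s(u2, v2)}).Reachable v1 x})
    (hu1 : u1 ∈ S1) (hu2 : u2 ∈ S1) (hv1 : v1 ∈ S2) (hv2 : v2 ∈ S2)
    (hUnion : S1 ∪ S2 = Set.univ) (hDisj : Disjoint S1 S2)
    (huu : u1 ≠ u2) (hvv : v1 ≠ v2)
    (hnadj1 : ¬ G.Adj u1 u2) (hnadj2 : ¬ G.Adj v1 v2)
    (f : Sym2 ↥S1) (hf : f ∈ (G.induce S1).edgeSet) :
    ∀ G1 : SimpleGraph ↥S1,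
      G1 = G.induce S1 ⊔ fromEdgeSet {s((⟨u1, hu1⟩ : ↥S1), (⟨u2, hu2⟩ : ↥S1))} →
      (IsKEdgeCut G1 2 {s((⟨u1, hu1⟩ : ↥S1), (⟨u2, hu2⟩ : ↥S1)), f} ↔
        (IsKEdgeCut G 2 {s(u1, v1), f.map Subtype.val} ∧
         IsKEdgeCut G 2 {s(u2, v2), f.map Subtype.val})) := by
  revert hf
  induction f using Sym2.ind with
  | _ p q =>
  intro hf G1 hG1
  classical
  rw [Sym2.map_pair_eq]
  -- notation for the three auxiliary graphs
  set D := G.deleteEdges {s(u1, v1), s(u2, v2)} with hD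
  set D1 := G.deleteEdges {s(u1, v1), s((p : V), (q : V))} with hD1
  set D2 := G.deleteEdges {s(u2, v2), s((p : V), (q : V))} with hD2
  set GF := G.deleteEdges {s((p : V), (q : V))} with hGF
  set HF := (G.induce S1).deleteEdges {s(p, q)} with hHF
  have hDadj : ∀ x y : V, D.Adj x y ↔
      G.Adj x y ∧ s(x, y) ≠ s(u1, v1) ∧ s(x, y) ≠ s(u2, v2) := by
    intro x y; rw [hD]; simp [not_or]
  have hD1adj : ∀ x y : V, D1.Adj x y ↔
      G.Adj x y ∧ s(x, y) ≠ s(u1, v1) ∧ s(x, y) ≠ s((p : V), (q : V)) := by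
    intro x y; rw [hD1]; simp [not_or]
  have hD2adj : ∀ x y : V, D2.Adj x y ↔
      G.Adj x y ∧ s(x, y) ≠ s(u2, v2) ∧ s(x, y) ≠ s((p : V), (q : V)) := by
    intro x y; rw [hD2]; simp [not_or]
  have hGFadj : ∀ x y : V, GF.Adj x y ↔ G.Adj x y ∧ s(x, y) ≠ s((p : V), (q : V)) := by
    intro x y; rw [hGF]; simp
  have hHFadj : ∀ a b : ↥S1, HF.Adj a b ↔ G.Adj (a : V) (b : V) ∧ s(a, b) ≠ s(p, q) := by
    intro a b; rw [hHF]
    simp [comap_adj, Function.Embedding.coe_subtype]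
  have hG1adj : ∀ a b : ↥S1, G1.Adj a b ↔
      (G.Adj (a : V) (b : V) ∨ (s(a, b) = s((⟨u1, hu1⟩ : ↥S1), (⟨u2, hu2⟩ : ↥S1)) ∧ a ≠ b)) := by
    intro a b; rw [hG1]
    simp [comap_adj, Function.Embedding.coe_subtype]
  -- basic membership facts
  have hmem : ∀ x : V, x ∈ S1 ∨ x ∈ S2 := fun x => by
    have hx : x ∈ S1 ∪ S2 := hUnion ▸ Set.mem_univ x
    exact hx
  have hnot : ∀ x : V, x ∈ S1 → x ∉ S2 := fun x hx => Set.disjoint_left.mp hDisj hx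
  have hS1mem : ∀ x : V, x ∈ S1 ↔ D.Reachable u1 x := fun x => by rw [hS1]; exact Iff.rfl
  have hS2mem : ∀ x : V, x ∈ S2 ↔ D.Reachable v1 x := fun x => by rw [hS2]; exact Iff.rfl
  have hadjS1 : ∀ x y : V, x ∈ S1 → D.Adj x y → y ∈ S1 := fun x y hx h =>
    (hS1mem y).2 (((hS1mem x).1 hx).trans h.reachable)
  have hadjS2 : ∀ x y : V, x ∈ S2 → D.Adj x y → y ∈ S2 := fun x y hx h =>
    (hS2mem y).2 (((hS2mem x).1 hx).trans h.reachable)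
  have hpq : G.Adj (p : V) (q : V) := hf
  have hv1S1 : v1 ∉ S1 := fun h => hnot v1 h hv1
  have hv2S1 : v2 ∉ S1 := fun h => hnot v2 h hv2
  have hu1S2 : u1 ∉ S2 := hnot u1 hu1
  have hu2S2 : u2 ∉ S2 := hnot u2 hu2
  have hpS1 : (p : V) ∈ S1 := p.2
  have hqS1 : (q : V) ∈ S1 := q.2
  -- distinctness of the relevant edges
  have hne12 : s(u1, v1) ≠ s(u2, v2) := by
    intro h
    rcases Sym2.eq_iff.mp h with ⟨h1, h2⟩ | ⟨h1, h2⟩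
    · exact huu h1
    · exact hv2S1 (h1 ▸ hu1)
  have hne1f : s(u1, v1) ≠ s((p : V), (q : V)) := by
    intro h
    rcases Sym2.eq_iff.mp h with ⟨h1, h2⟩ | ⟨h1, h2⟩
    · exact hv1S1 (h2 ▸ hqS1)
    · exact hv1S1 (h2 ▸ hpS1)
  have hne2f : s(u2, v2) ≠ s((p : V), (q : V)) := by
    intro h
    rcases Sym2.eq_iff.mp h with ⟨h1, h2⟩ | ⟨h1, h2⟩
    · exact hv2S1 (h2 ▸ hqS1)
    · exact hv2S1 (h2 ▸ hpS1)
  have hmapeq : ∀ (x y : V) (hx : x ∈ S1) (hy : y ∈ S1),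
      s((⟨x, hx⟩ : ↥S1), (⟨y, hy⟩ : ↥S1)) = s(p, q) → s(x, y) = s((p : V), (q : V)) := by
    intro x y hx hy hh
    simpa [Sym2.map_pair_eq] using congrArg (Sym2.map (Subtype.val : ↥S1 → V)) hh
  have hnef' : s((⟨u1, hu1⟩ : ↥S1), (⟨u2, hu2⟩ : ↥S1)) ≠ s(p, q) := by
    intro h
    have h2 := hmapeq u1 u2 hu1 hu2 h
    rcases Sym2.eq_iff.mp h2 with ⟨h3, h4⟩ | ⟨h3, h4⟩
    · exact hnadj1 (h3 ▸ h4 ▸ hpq)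
    · exact hnadj1 (h3 ▸ h4 ▸ hpq.symm)
  have hmapeq' : ∀ (a b : ↥S1), s((a : V), (b : V)) = s((p : V), (q : V)) → s(a, b) = s(p, q) := by
    intro a b h
    rcases Sym2.eq_iff.mp h with ⟨h1, h2⟩ | ⟨h1, h2⟩
    · rw [Subtype.ext h1, Subtype.ext h2]
    · rw [Subtype.ext h1, Subtype.ext h2, Sym2.eq_swap]
  -- crossing edges are exactly e1 and e2
  have hcross : ∀ x y : V, G.Adj x y → x ∈ S1 → y ∈ S2 →
      (x = u1 ∧ y = v1) ∨ (x = u2 ∧ y = v2) := by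
    intro x y hxy hx hy
    by_cases hc1 : s(x, y) = s(u1, v1)
    · rcases Sym2.eq_iff.mp hc1 with ⟨h1, h2⟩ | ⟨h1, h2⟩
      · exact Or.inl ⟨h1, h2⟩
      · exact absurd (h1 ▸ hx) hv1S1
    · by_cases hc2 : s(x, y) = s(u2, v2)
      · rcases Sym2.eq_iff.mp hc2 with ⟨h1, h2⟩ | ⟨h1, h2⟩
        · exact Or.inr ⟨h1, h2⟩
        · exact absurd (h1 ▸ hx) hv2S1
      · have hd : D.Adj x y := (hDadj x y).mpr ⟨hxy, hc1, hc2⟩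
        exact absurd (hadjS1 x y hx hd) (fun h => hnot y h hy)
  -- G1 minus the two edges equals H1 minus f
  have hG1del : G1.deleteEdges {s((⟨u1, hu1⟩ : ↥S1), (⟨u2, hu2⟩ : ↥S1)), s(p, q)} = HF := by
    rw [hHF]
    ext a b
    simp only [deleteEdges_adj, Set.mem_insert_iff, Set.mem_singleton_iff, not_or,
      comap_adj, Function.Embedding.coe_subtype, hG1adj]
    constructor
    · rintro ⟨hadj | ⟨he, hne⟩, h1, h2⟩
      · exact ⟨hadj, h2⟩
      · exact absurd he h1
    · rintro ⟨hadj, h2⟩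
      refine ⟨Or.inl hadj, fun h1 => ?_, h2⟩
      rcases Sym2.eq_iff.mp h1 with ⟨rfl, rfl⟩ | ⟨rfl, rfl⟩
      · exact hnadj1 hadj
      · exact hnadj1 hadj.symm
  -- H1 is connected
  have hH1conn : (G.induce S1).Connected := by
    rw [connected_iff]
    refine ⟨fun a b => ?_, ⟨⟨u1, hu1⟩⟩⟩
    have hra : D.Reachable (a : V) (b : V) :=
      (((hS1mem (a : V)).1 a.2).symm.trans ((hS1mem (b : V)).1 b.2))
    have hm := walk_reach_map D (G.induce S1)
        (fun x => if h : x ∈ S1 then (⟨x, h⟩ : ↥S1) else ⟨u1, hu1⟩)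
        (by
          intro x y hxy
          by_cases hx : x ∈ S1
          · have hy : y ∈ S1 := hadjS1 x y hx hxy
            right
            simp only [dif_pos hx, dif_pos hy, comap_adj, Function.Embedding.coe_subtype]
            exact ((hDadj x y).mp hxy).1
          · have hy : y ∉ S1 := fun hy => hx (hadjS1 y x hy hxy.symm)
            left
            simp [dif_neg hx, dif_neg hy]) hra
    simpa [dif_pos a.2, dif_pos b.2] using hm
  -- HF connected iff D1 connected
  have iff1 : HF.Connected ↔ D1.Connected := by
    constructor
    · intro hc
      rw [connected_iff]
      refine ⟨?_, ⟨u1⟩⟩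
      have key : ∀ x : V, D1.Reachable x v2 := by
        intro x
        have hadj22 : D1.Adj u2 v2 :=
          (hD1adj u2 v2).mpr ⟨he2, Ne.symm hne12, hne2f⟩
        rcases hmem x with hx | hx
        · have h1 : HF.Reachable ⟨x, hx⟩ ⟨u2, hu2⟩ := hc.preconnected _ _
          have h2 := walk_reach_map HF D1 (Subtype.val : ↥S1 → V)
            (by
              intro a b hab
              right
              rw [hHFadj] at hab
              refine (hD1adj _ _).mpr ⟨hab.1, ?_, ?_⟩
              · intro h
                rcases Sym2.eq_iff.mp h with ⟨h1, h2⟩ | ⟨h1, h2⟩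
                · exact hv1S1 (h2 ▸ b.2)
                · exact hv1S1 (h1 ▸ a.2)
              · exact fun h => hab.2 (hmapeq' a b h)) h1
          exact h2.trans hadj22.reachable
        · have h1 : D.Reachable x v2 := ((hS2mem x).1 hx).symm.trans ((hS2mem v2).1 hv2)
          exact walk_reach_pred D D1 (· ∈ S2) (fun a b h ha => hadjS2 a b ha h)
            (by
              intro a b hab ha hb
              refine (hD1adj a b).mpr ⟨((hDadj a b).mp hab).1, ?_, ?_⟩
              · intro h
                rcases Sym2.eq_iff.mp h with ⟨h1, h2⟩ | ⟨h1, h2⟩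
                · exact hu1S2 (h1 ▸ ha)
                · exact hu1S2 (h2 ▸ hb)
              · intro h
                rcases Sym2.eq_iff.mp h with ⟨h1, h2⟩ | ⟨h1, h2⟩
                · exact hnot _ hpS1 (h1 ▸ ha)
                · exact hnot _ hqS1 (h1 ▸ ha)) h1 hx
      exact fun a b => (key a).trans (key b).symm
    · intro hc
      rw [connected_iff]
      refine ⟨fun a b => ?_, ⟨⟨u1, hu1⟩⟩⟩
      have hr : D1.Reachable (a : V) (b : V) := hc.preconnected _ _
      have hm := walk_reach_map D1 HF
          (fun x => if h : x ∈ S1 then (⟨x, h⟩ : ↥S1) else ⟨u2, hu2⟩)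
          (by
            intro x y hxy
            rw [hD1adj] at hxy
            by_cases hx : x ∈ S1 <;> by_cases hy : y ∈ S1
            · right
              simp only [dif_pos hx, dif_pos hy]
              refine (hHFadj _ _).mpr ⟨hxy.1, fun h => hxy.2.2 (hmapeq x y hx hy h)⟩
            · have hy2 : y ∈ S2 := (hmem y).resolve_left hy
              rcases hcross x y hxy.1 hx hy2 with ⟨rfl, rfl⟩ | ⟨rfl, rfl⟩
              · exact absurd rfl hxy.2.1
              · left
                simp only [dif_pos hx, dif_neg hy]
            · have hx2 : x ∈ S2 := (hmem x).resolve_left hx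
              rcases hcross y x hxy.1.symm hy hx2 with ⟨rfl, rfl⟩ | ⟨rfl, rfl⟩
              · exact absurd rfl (fun h => hxy.2.1 (Sym2.eq_swap ▸ h))
              · left
                simp only [dif_neg hx, dif_pos hy]
            · left
              simp only [dif_neg hx, dif_neg hy]) hr
      simpa [dif_pos a.2, dif_pos b.2] using hm
  -- HF connected iff D2 connected
  have iff2 : HF.Connected ↔ D2.Connected := by
    constructor
    · intro hc
      rw [connected_iff]
      refine ⟨?_, ⟨u1⟩⟩
      have key : ∀ x : V, D2.Reachable x v1 := by
        intro x
        have hadj11 : D2.Adj u1 v1 :=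
          (hD2adj u1 v1).mpr ⟨he1, hne12, hne1f⟩
        rcases hmem x with hx | hx
        · have h1 : HF.Reachable ⟨x, hx⟩ ⟨u1, hu1⟩ := hc.preconnected _ _
          have h2 := walk_reach_map HF D2 (Subtype.val : ↥S1 → V)
            (by
              intro a b hab
              right
              rw [hHFadj] at hab
              refine (hD2adj _ _).mpr ⟨hab.1, ?_, ?_⟩
              · intro h
                rcases Sym2.eq_iff.mp h with ⟨h1, h2⟩ | ⟨h1, h2⟩
                · exact hv2S1 (h2 ▸ b.2)
                · exact hv2S1 (h1 ▸ a.2)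
              · exact fun h => hab.2 (hmapeq' a b h)) h1
          exact h2.trans hadj11.reachable
        · have h1 : D.Reachable x v1 := ((hS2mem x).1 hx).symm
          exact walk_reach_pred D D2 (· ∈ S2) (fun a b h ha => hadjS2 a b ha h)
            (by
              intro a b hab ha hb
              refine (hD2adj a b).mpr ⟨((hDadj a b).mp hab).1, ?_, ?_⟩
              · intro h
                rcases Sym2.eq_iff.mp h with ⟨h1, h2⟩ | ⟨h1, h2⟩
                · exact hu2S2 (h1 ▸ ha)
                · exact hu2S2 (h2 ▸ hb)
              · intro h
                rcases Sym2.eq_iff.mp h with ⟨h1, h2⟩ | ⟨h1, h2⟩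
                · exact hnot _ hpS1 (h1 ▸ ha)
                · exact hnot _ hqS1 (h1 ▸ ha)) h1 hx
      exact fun a b => (key a).trans (key b).symm
    · intro hc
      rw [connected_iff]
      refine ⟨fun a b => ?_, ⟨⟨u1, hu1⟩⟩⟩
      have hr : D2.Reachable (a : V) (b : V) := hc.preconnected _ _
      have hm := walk_reach_map D2 HF
          (fun x => if h : x ∈ S1 then (⟨x, h⟩ : ↥S1) else ⟨u1, hu1⟩)
          (by
            intro x y hxy
            rw [hD2adj] at hxy
            by_cases hx : x ∈ S1 <;> by_cases hy : y ∈ S1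
            · right
              simp only [dif_pos hx, dif_pos hy]
              refine (hHFadj _ _).mpr ⟨hxy.1, fun h => hxy.2.2 (hmapeq x y hx hy h)⟩
            · have hy2 : y ∈ S2 := (hmem y).resolve_left hy
              rcases hcross x y hxy.1 hx hy2 with ⟨rfl, rfl⟩ | ⟨rfl, rfl⟩
              · left
                simp only [dif_pos hx, dif_neg hy]
              · exact absurd rfl hxy.2.1
            · have hx2 : x ∈ S2 := (hmem x).resolve_left hx
              rcases hcross y x hxy.1.symm hy hx2 with ⟨rfl, rfl⟩ | ⟨rfl, rfl⟩
              · left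
                simp only [dif_neg hx, dif_pos hy]
              · exact absurd rfl (fun h => hxy.2.1 (Sym2.eq_swap ▸ h))
            · left
              simp only [dif_neg hx, dif_neg hy]) hr
      simpa [dif_pos a.2, dif_pos b.2] using hm
  -- G1 is connected
  have hle1 : G.induce S1 ≤ G1 := by rw [hG1]; exact le_sup_left
  have hG1conn : G1.Connected := hH1conn.mono hle1
  -- G1 minus the new edge is connected
  have hG1e : (G1.deleteEdges {s((⟨u1, hu1⟩ : ↥S1), (⟨u2, hu2⟩ : ↥S1))}).Connected := by
    refine hH1conn.mono ?_
    intro a b hab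
    have hab' : G.Adj (a : V) (b : V) := hab
    rw [deleteEdges_adj]
    refine ⟨hle1 hab, ?_⟩
    rw [Set.mem_singleton_iff]
    intro h
    rcases Sym2.eq_iff.mp h with ⟨rfl, rfl⟩ | ⟨rfl, rfl⟩
    · exact hnadj1 hab'
    · exact hnadj1 hab'.symm
  -- GF connected implies G1 minus f connected
  have hG1f : GF.Connected → (G1.deleteEdges {s(p, q)}).Connected := by
    intro hc
    rw [connected_iff]
    refine ⟨fun a b => ?_, ⟨⟨u1, hu1⟩⟩⟩
    have hr : GF.Reachable (a : V) (b : V) := hc.preconnected _ _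
    have hm := walk_reach_map GF (G1.deleteEdges {s(p, q)})
        (fun x => if h : x ∈ S1 then (⟨x, h⟩ : ↥S1) else ⟨u2, hu2⟩)
        (by
          intro x y hxy
          rw [hGFadj] at hxy
          by_cases hx : x ∈ S1 <;> by_cases hy : y ∈ S1
          · right
            simp only [dif_pos hx, dif_pos hy, deleteEdges_adj, Set.mem_singleton_iff]
            exact ⟨(hG1adj _ _).mpr (Or.inl hxy.1), fun h => hxy.2 (hmapeq x y hx hy h)⟩
          · have hy2 : y ∈ S2 := (hmem y).resolve_left hy
            rcases hcross x y hxy.1 hx hy2 with ⟨rfl, rfl⟩ | ⟨rfl, rfl⟩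
            · right
              simp only [dif_pos hx, dif_neg hy, deleteEdges_adj, Set.mem_singleton_iff]
              refine ⟨(hG1adj _ _).mpr (Or.inr ⟨rfl, fun h => huu (congrArg Subtype.val h)⟩), ?_⟩
              exact fun h => hnef' h
            · left
              simp only [dif_pos hx, dif_neg hy]
          · have hx2 : x ∈ S2 := (hmem x).resolve_left hx
            rcases hcross y x hxy.1.symm hy hx2 with ⟨rfl, rfl⟩ | ⟨rfl, rfl⟩
            · right
              simp only [dif_neg hx, dif_pos hy, deleteEdges_adj, Set.mem_singleton_iff]
              refine ⟨(hG1adj _ _).mpr (Or.inr ⟨Sym2.eq_swap, fun h => huu (congrArg Subtype.val h).symm⟩), ?_⟩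
              exact fun h => hnef' (Sym2.eq_swap ▸ h)
            · left
              simp only [dif_neg hx, dif_pos hy]
          · left
            simp only [dif_neg hx, dif_neg hy]) hr
    simpa [dif_pos a.2, dif_pos b.2] using hm
  -- final assembly
  constructor
  · rintro ⟨hcard, ⟨hsub, hnc⟩, hmin⟩
    rw [hG1del] at hnc
    refine ⟨⟨Set.ncard_pair hne1f, ⟨?_, fun h => hnc (iff1.mpr h)⟩, ?_⟩,
            ⟨Set.ncard_pair hne2f, ⟨?_, fun h => hnc (iff2.mpr h)⟩, ?_⟩⟩
    · rintro x (rfl | hx)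
      · exact G.mem_edgeSet.mpr he1
      · rw [Set.mem_singleton_iff] at hx; subst hx; exact G.mem_edgeSet.mpr hpq
    · intro T hT
      rcases ssubset_pair hne1f hT with rfl | rfl | rfl
      · exact not_disc_empty hconn
      · exact not_disc_single hconn hbl _
      · exact not_disc_single hconn hbl _
    · rintro x (rfl | hx)
      · exact G.mem_edgeSet.mpr he2
      · rw [Set.mem_singleton_iff] at hx; subst hx; exact G.mem_edgeSet.mpr hpq
    · intro T hT
      rcases ssubset_pair hne2f hT with rfl | rfl | rfl
      · exact not_disc_empty hconn
      · exact not_disc_single hconn hbl _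
      · exact not_disc_single hconn hbl _
  · rintro ⟨⟨hc1, ⟨hs1, hd1⟩, hm1⟩, ⟨hc2, ⟨hs2, hd2⟩, hm2⟩⟩
    have hNHF : ¬ HF.Connected := fun h => hd1 (iff1.mp h)
    refine ⟨Set.ncard_pair hnef', ⟨?_, ?_⟩, ?_⟩
    · rintro x (rfl | hx)
      · exact G1.mem_edgeSet.mpr ((hG1adj _ _).mpr
          (Or.inr ⟨rfl, fun h => huu (congrArg Subtype.val h)⟩))
      · rw [Set.mem_singleton_iff] at hx; subst hx
        exact G1.mem_edgeSet.mpr ((hG1adj _ _).mpr (Or.inl hpq))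
    · rw [hG1del]
      exact hNHF
    · intro T hT
      rcases ssubset_pair hnef' hT with rfl | rfl | rfl
      · exact not_disc_empty hG1conn
      · rintro ⟨-, hncon⟩
        exact hncon hG1e
      · rintro ⟨-, hncon⟩
        apply hncon
        apply hG1f
        have hss : ({s((p : V), (q : V))} : Set (Sym2 V)) ⊂ {s(u1, v1), s((p : V), (q : V))} := by
          rw [Set.ssubset_iff_subset_ne]
          constructor
          · intro x hx
            rw [Set.mem_singleton_iff] at hx
            subst hx
            exact Set.mem_insert_iff.mpr (Or.inr rfl)
          · intro h
            have h2 : s(u1, v1) ∈ ({s((p : V), (q : V))} : Set (Sym2 V)) :=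
              h ▸ Set.mem_insert _ _
            exact hne1f (Set.mem_singleton_iff.mp h2)
        have hnd := hm1 _ hss
        rw [IsDisconnectingSet] at hnd
        push_neg at hnd
        exact hnd (by
          intro x hx
          rw [Set.mem_singleton_iff] at hx
          subst hx
          exact G.mem_edgeSet.mpr hpq)
end
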